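/- Let Ω=(0,∞), w(x)=(1−2|x−1/2|)₊ and f(x)=(1−x)₊, and let Π be the set of probability measures π on Ω with ∫w dπ ≤ 0. Then Π = {π : π((0,1))=0}, sup_{π∈Π}∫f dπ = 0, while inf{x∈ℝ : there exists α≥0 such that x+αw(·) ≥ f(·) pointwise on Ω} = 1. In particular, there is a duality gap when the no-arbitrage condition of the auxiliary duality lemma fails. -/

import Mathlib

open MeasureTheory Set Filter

noncomputable section

/-- Butterfly payoff `w(x) = (1 - 2|x - 1/2|)₊`. -/
def wBfly (x : ℝ) : ℝ := max (1 - 2 * |x - 1 / 2|) 0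

/-- Put payoff `f(x) = (1 - x)₊`. -/
def fPut (x : ℝ) : ℝ := max (1 - x) 0

/-- The set `Π` of probability measures on `Ω = (0,∞)` with `∫ w dπ ≤ 0`
(modelled as measures on `ℝ` concentrated on `(0,∞)`). -/
def PiSet : Set (Measure ℝ) :=
  {π | IsProbabilityMeasure π ∧ π (Set.Ioi (0 : ℝ))ᶜ = 0 ∧ (∫ x, wBfly x ∂π) ≤ 0}

/-!
`w ≥ 0` has support `(0, 1)`, so `∫ w dπ ≤ 0` forces `π((0, 1)) = 0`; on `Ω` the put `f` vanishes
off `(0, 1)`, hence every `π ∈ Π` prices it at `0` (and `δ₁ ∈ Π`). On the other side, a superhedge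
`x + α w ≥ f` on `(0, ∞)` is a closed condition in the point, so it persists at `0`, where
`w(0) = 0` and `f(0) = 1`: thus `x ≥ 1`, and `x = 1, α = 0` works.
-/

lemma continuous_wBfly : Continuous wBfly := by
  unfold wBfly; fun_prop

lemma continuous_fPut : Continuous fPut := by
  unfold fPut; fun_prop

lemma wBfly_nonneg (x : ℝ) : 0 ≤ wBfly x := le_max_right _ _

lemma wBfly_le_one (x : ℝ) : wBfly x ≤ 1 :=
  max_le (by linarith [abs_nonneg (x - 1 / 2)]) zero_le_one

lemma support_wBfly : Function.support wBfly = Ioo 0 1 := by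
  ext x
  have : 0 < 1 - 2 * |x - 1 / 2| ↔ |x - 1 / 2| < 1 / 2 := by constructor <;> intro <;> linarith
  simp only [Function.mem_support, wBfly, ne_eq, max_eq_right_iff, not_le, this, abs_lt, mem_Ioo]
  constructor <;> rintro ⟨_, _⟩ <;> constructor <;> linarith

lemma support_fPut : Function.support fPut = Iio 1 := by
  ext x
  simp only [Function.mem_support, fPut, ne_eq, max_eq_right_iff, mem_Iio, not_le, sub_pos]

lemma integrable_wBfly (π : Measure ℝ) [IsFiniteMeasure π] : Integrable wBfly π :=
  (integrable_const 1).mono' continuous_wBfly.aestronglyMeasurable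
    (ae_of_all _ fun x ↦ by
      rw [Real.norm_eq_abs, abs_of_nonneg (wBfly_nonneg x)]; exact wBfly_le_one x)

lemma integral_wBfly_nonpos_iff (π : Measure ℝ) [IsFiniteMeasure π] :
    ∫ x, wBfly x ∂π ≤ 0 ↔ π (Ioo 0 1) = 0 := by
  rw [← support_wBfly, Measure.measure_support_eq_zero_iff π,
    ← integral_eq_zero_iff_of_nonneg wBfly_nonneg (integrable_wBfly π)]
  exact ⟨fun h ↦ h.antisymm (integral_nonneg wBfly_nonneg), le_of_eq⟩

lemma piSet_eq : PiSet = {π : Measure ℝ | IsProbabilityMeasure π ∧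
    π (Ioi (0 : ℝ))ᶜ = 0 ∧ π (Ioo (0 : ℝ) 1) = 0} := by
  ext π
  refine ⟨fun ⟨hπ, h0, hw⟩ ↦ ⟨hπ, h0, ?_⟩, fun ⟨hπ, h0, h1⟩ ↦ ⟨hπ, h0, ?_⟩⟩
  · exact (integral_wBfly_nonpos_iff π).1 hw
  · exact (integral_wBfly_nonpos_iff π).2 h1

lemma integral_fPut_eq_zero_of_mem_piSet {π : Measure ℝ} (hπ : π ∈ PiSet) :
    ∫ x, fPut x ∂π = 0 := by
  rw [piSet_eq] at hπ
  obtain ⟨-, h0, h1⟩ := hπ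
  have hIio : Iio (1 : ℝ) ⊆ (Ioi 0)ᶜ ∪ Ioo 0 1 := fun x hx ↦ by
    rcases le_or_gt x 0 with h | h
    exacts [Or.inl (not_lt.2 h), Or.inr ⟨h, hx⟩]
  refine integral_eq_zero_of_ae ((Measure.measure_support_eq_zero_iff π).1 ?_)
  rw [support_fPut]
  exact measure_mono_null hIio (measure_union_null h0 h1)

lemma dirac_mem_piSet {a : ℝ} (ha : 1 ≤ a) : Measure.dirac a ∈ PiSet := by
  rw [piSet_eq]
  refine ⟨inferInstance, ?_, ?_⟩
  · rw [Measure.dirac_apply' _ measurableSet_Ioi.compl]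
    simp [show (0 : ℝ) < a by linarith]
  · rw [Measure.dirac_apply' _ measurableSet_Ioo]
    simp [ha]

lemma setOf_integral_fPut_piSet : {y : ℝ | ∃ π ∈ PiSet, y = ∫ x, fPut x ∂π} = {0} := by
  ext y
  refine ⟨fun ⟨π, hπ, hy⟩ ↦ hy ▸ integral_fPut_eq_zero_of_mem_piSet hπ, ?_⟩
  rintro rfl
  exact ⟨_, dirac_mem_piSet le_rfl, by simp [fPut]⟩

lemma superhedgingPrices_eq_Ici :
    {x : ℝ | ∃ α : ℝ, 0 ≤ α ∧ ∀ y : ℝ, 0 < y → fPut y ≤ x + α * wBfly y} = Ici 1 := by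
  ext x
  refine ⟨fun ⟨α, _, h⟩ ↦ ?_, fun hx ↦ ⟨0, le_rfl, fun y hy ↦ ?_⟩⟩
  · have hclosed : IsClosed {y | fPut y ≤ x + α * wBfly y} :=
      isClosed_le continuous_fPut (continuous_const.add (continuous_const.mul continuous_wBfly))
    have h0 : (0 : ℝ) ∈ closure (Ioi 0) := by rw [closure_Ioi]; exact mem_Ici.2 le_rfl
    calc 1 = fPut 0 := by norm_num [fPut]
      _ ≤ x + α * wBfly 0 := hclosed.closure_subset_iff.2 h h0
      _ = x := by norm_num [wBfly]
  · rw [mem_Ici] at hx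
    rw [zero_mul, add_zero]
    exact max_le (by linarith) (by linarith)

/-- Counterexample showing the necessity of the no-arbitrage condition in the
auxiliary duality lemma: `Π = {π : π((0,1)) = 0}`, `sup_{π∈Π} ∫ f dπ = 0`, while
the cheapest superhedging constant equals `1`; in particular there is a duality
gap. -/
theorem duality_gap_example :
    PiSet = {π : Measure ℝ | IsProbabilityMeasure π ∧ π (Set.Ioi (0 : ℝ))ᶜ = 0 ∧
        π (Set.Ioo (0 : ℝ) 1) = 0} ∧
    sSup {y : ℝ | ∃ π ∈ PiSet, y = ∫ x, fPut x ∂π} = 0 ∧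
    sInf {x : ℝ | ∃ α : ℝ, 0 ≤ α ∧ ∀ y : ℝ, 0 < y → fPut y ≤ x + α * wBfly y} = 1 :=
  ⟨piSet_eq, by rw [setOf_integral_fPut_piSet, csSup_singleton],
    by rw [superhedgingPrices_eq_Ici, csInf_Ici]⟩
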